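/- arXiv:2201.00128 — 6 statements merged into one kernel-verified Lean document; each statement's English description precedes it below -/
import Mathlib

section
/- Let G be a topological group whose topology is induced by a left-invariant metric dist, let μ be a left-invariant Borel measure on G, let Γ be a countable subgroup of G, and let F ⊆ G be a measurable fundamental domain for the action of Γ on G by left multiplication. If μ(F) < μ(B(1,R)) for some R > 0, where B(1,R) is the open metric ball of radius R centered at the identity, then there exist γ ∈ Γ with γ ≠ 1 and a point x ∈ G such that dist(x, γ·x) ≤ 2R. -/
open MeasureTheory

/-- If `G` is a topological group whose topology is induced by a left-invariant metric,
`μ` is a left-invariant Borel measure on `G`, `Γ` is a countable subgroup and `F` is a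
measurable fundamental domain for the left-multiplication action of `Γ` on `G` with
`μ F < μ (B(1, R))` for some `R > 0`, then some nontrivial `γ ∈ Γ` moves some point `x`
a distance at most `2R`. -/
theorem exists_short_displacement_of_fundamentalDomain_small
    {G : Type*} [Group G] [MetricSpace G] [IsTopologicalGroup G]
    [MeasurableSpace G] [BorelSpace G]
    (hinv : ∀ g x y : G, dist (g * x) (g * y) = dist x y)
    (μ : Measure G)
    (hμ : ∀ (g : G) (S : Set G), MeasurableSet S → μ ((fun x => g * x) '' S) = μ S)
    (Γ : Subgroup G) [Countable Γ]
    (F : Set G) (hFmeas : MeasurableSet F)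
    (hF : IsFundamentalDomain Γ F μ)
    (R : ℝ) (hR : 0 < R)
    (hlt : μ F < μ (Metric.ball (1 : G) R)) :
    ∃ γ ∈ Γ, γ ≠ 1 ∧ ∃ x : G, dist x (γ * x) ≤ 2 * R := by
  haveI : SMulInvariantMeasure Γ G μ := by
    constructor
    intro c s hs
    have : ((c • ·) : G → G) ⁻¹' s = (fun x => (c⁻¹ : G) * x) '' s := by
      ext x
      simp [Set.mem_image, Subgroup.smul_def, eq_inv_mul_iff_mul_eq, eq_comm]
    rw [this, hμ _ _ hs]
  obtain ⟨x, hx, y, hy, γ, hγ, hxy⟩ :=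
    hF.exists_ne_one_smul_eq measurableSet_ball.nullMeasurableSet hlt
  refine ⟨γ, γ.2, fun h => hγ (Subtype.ext h), x, ?_⟩
  have hxy' : (γ : G) * x = y := hxy
  rw [hxy']
  calc dist x y ≤ dist x 1 + dist 1 y := dist_triangle _ _ _
    _ ≤ R + R := by
        have h1 : dist x 1 < R := by
          simpa [Metric.mem_ball, dist_comm] using hx
        have h2 : dist (1 : G) y < R := by
          rw [dist_comm]; simpa [Metric.mem_ball] using hy
        linarith
    _ = 2 * R := by ring
end

section
/- Let G be a topological group whose topology is induced by a left-invariant metric dist, let μ be a left-invariant Borel measure on G, let Γ be a countable subgroup of G, and let F ⊆ G be a measurable fundamental domain of finite measure for the action of Γ on G by left multiplication. Assume there are Q > 0 and 0 < μ(B(1,1)) < ∞ such that μ(B(1,r)) = r^Q · μ(B(1,1)) for all r > 0, where B(1,r) denotes the open metric ball of radius r centered at the identity. Then for every R > (μ(F)/μ(B(1,1)))^{1/Q} there exist γ ∈ Γ with γ ≠ 1 and a point x ∈ G such that dist(x, γ·x) ≤ 2R. (Equivalently, the systole inf{dist(x, γ·x) : γ ∈ Γ, γ ≠ 1, x ∈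 G} is at most 2 μ(B(1,1))^{-1/Q} μ(F)^{1/Q}.) -/
open MeasureTheory Pointwise

/-- Abstract systolic inequality: if `G` is a topological group whose topology comes from a
left-invariant metric, `μ` is a left-invariant Borel measure, `Γ` a countable subgroup with a
measurable fundamental domain `F` of finite measure, and the measure of balls centered at the
identity is homogeneous of degree `Q > 0` (with `0 < μ(B(1,1)) < ∞`), then for every
`R > (μ(F)/μ(B(1,1)))^{1/Q}` there are `γ ∈ Γ`, `γ ≠ 1`, and `x ∈ G` with
`dist x (γ·x) ≤ 2R`. -/
theorem systole_le_of_homogeneous_volume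
    {G : Type*} [Group G] [MetricSpace G] [IsTopologicalGroup G]
    [MeasurableSpace G] [BorelSpace G]
    (hinv : ∀ g x y : G, dist (g * x) (g * y) = dist x y)
    (μ : Measure G)
    (hμ : ∀ (g : G) (S : Set G), MeasurableSet S → μ ((fun x => g * x) '' S) = μ S)
    (Γ : Subgroup G) [Countable Γ]
    (F : Set G) (hFmeas : MeasurableSet F)
    (hF : IsFundamentalDomain Γ F μ)
    (hFfin : μ F < ⊤)
    (Q : ℝ) (hQ : 0 < Q)
    (hpos : 0 < μ (Metric.ball (1 : G) 1))
    (hfin : μ (Metric.ball (1 : G) 1) < ⊤)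
    (hhom : ∀ r : ℝ, 0 < r →
      μ (Metric.ball (1 : G) r) = ENNReal.ofReal (r ^ Q) * μ (Metric.ball (1 : G) 1))
    (R : ℝ)
    (hR : ((μ F).toReal / (μ (Metric.ball (1 : G) 1)).toReal) ^ ((1 : ℝ) / Q) < R) :
    ∃ γ ∈ Γ, γ ≠ 1 ∧ ∃ x : G, dist x (γ * x) ≤ 2 * R := by
  by_contra hcon
  push_neg at hcon
  set a : ℝ := (μ F).toReal / (μ (Metric.ball (1 : G) 1)).toReal with ha
  have ha0 : 0 ≤ a := div_nonneg ENNReal.toReal_nonneg ENNReal.toReal_nonneg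
  have hR0 : 0 < R := lt_of_le_of_lt (Real.rpow_nonneg ha0 _) hR
  -- SMul invariance instance
  haveI : SMulInvariantMeasure Γ G μ := by
    constructor
    intro c s hs
    have himg : ((c : G) • ·) ⁻¹' s = (fun x => (c : G)⁻¹ * x) '' s := by
      ext x
      simp [Set.mem_image, smul_eq_mul, eq_comm, eq_inv_mul_iff_mul_eq]
    calc μ ((c • ·) ⁻¹' s) = μ ((fun x => (c : G)⁻¹ * x) '' s) := by
          rw [← himg]; rfl
      _ = μ s := hμ _ s hs
  have hball : μ (Metric.ball (1 : G) R) = ENNReal.ofReal (R ^ Q) * μ (Metric.ball (1 : G) 1) :=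
    hhom R hR0
  -- μ F < μ (ball 1 R)
  have haR : a < R ^ Q := by
    have h1 : (a ^ ((1:ℝ)/Q)) ^ Q < R ^ Q :=
      Real.rpow_lt_rpow (Real.rpow_nonneg ha0 _) hR hQ
    rwa [← Real.rpow_mul ha0, one_div_mul_cancel hQ.ne', Real.rpow_one] at h1
  have hBtpos : 0 < (μ (Metric.ball (1 : G) 1)).toReal :=
    ENNReal.toReal_pos hpos.ne' hfin.ne
  have hkey : μ F < μ (Metric.ball (1 : G) R) := by
    rw [hball]
    have h2 : (μ F).toReal < R ^ Q * (μ (Metric.ball (1 : G) 1)).toReal := by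
      rw [ha] at haR
      calc (μ F).toReal = a * (μ (Metric.ball (1 : G) 1)).toReal := by
            rw [ha]; field_simp
        _ < R ^ Q * (μ (Metric.ball (1 : G) 1)).toReal := by
            exact mul_lt_mul_of_pos_right haR hBtpos
    calc μ F = ENNReal.ofReal ((μ F).toReal) := (ENNReal.ofReal_toReal hFfin.ne).symm
      _ < ENNReal.ofReal (R ^ Q * (μ (Metric.ball (1 : G) 1)).toReal) := by
          exact (ENNReal.ofReal_lt_ofReal_iff_of_nonneg ENNReal.toReal_nonneg).mpr h2
      _ = ENNReal.ofReal (R ^ Q) * μ (Metric.ball (1 : G) 1) := by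
          rw [ENNReal.ofReal_mul (Real.rpow_nonneg hR0.le Q), ENNReal.ofReal_toReal hfin.ne]
  -- the sets γ • ball ∩ F
  set B : Set G := Metric.ball (1 : G) R with hB
  set T : Γ → Set G := fun γ => γ • B ∩ F with hT
  have hTmeas : ∀ γ : Γ, MeasurableSet (T γ) := by
    intro γ
    have : γ • B = (fun x => (γ : G)⁻¹ * x) ⁻¹' B := by
      ext x
      rw [Set.mem_smul_set_iff_inv_smul_mem]
      rfl
    exact (this ▸ ((Metric.isOpen_ball.measurableSet).preimage
      (measurable_const_mul _))).inter hFmeas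
  have hTdisj : Pairwise (Function.onFun Disjoint T) := by
    intro γ δ hne
    simp only [Function.onFun, Set.disjoint_left]
    rintro x ⟨hxγ, -⟩ ⟨hxδ, -⟩
    have h1 : (γ : G)⁻¹ * x ∈ B := by
      rw [Set.mem_smul_set_iff_inv_smul_mem] at hxγ; exact hxγ
    have h2 : (δ : G)⁻¹ * x ∈ B := by
      rw [Set.mem_smul_set_iff_inv_smul_mem] at hxδ; exact hxδ
    have hd1 : dist ((γ : G)⁻¹ * x) (1 : G) < R := Metric.mem_ball.mp h1
    have hd2 : dist ((δ : G)⁻¹ * x) (1 : G) < R := Metric.mem_ball.mp h2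
    have hdd : dist ((γ : G)⁻¹ * x) ((δ : G)⁻¹ * x) < 2 * R := by
      calc dist ((γ : G)⁻¹ * x) ((δ : G)⁻¹ * x)
          ≤ dist ((γ : G)⁻¹ * x) 1 + dist (1 : G) ((δ : G)⁻¹ * x) := dist_triangle _ _ _
        _ < R + R := by rw [dist_comm (1 : G)]; exact add_lt_add hd1 hd2
        _ = 2 * R := by ring
    have heq : dist ((γ : G)⁻¹ * x) ((δ : G)⁻¹ * x)
        = dist x (((γ : G) * (δ : G)⁻¹) * x) := by
      have := hinv (γ : G) ((γ : G)⁻¹ * x) ((δ : G)⁻¹ * x)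
      rw [← this, mul_inv_cancel_left, mul_assoc]
    have hmem : (γ : G) * (δ : G)⁻¹ ∈ Γ := mul_mem γ.2 (inv_mem δ.2)
    have hne1 : (γ : G) * (δ : G)⁻¹ ≠ 1 := by
      intro h
      apply hne
      have : (γ : G) = (δ : G) := by
        rw [mul_inv_eq_one] at h; exact h
      exact Subtype.ext this
    have := hcon _ hmem hne1 x
    rw [← heq] at this
    exact absurd hdd (not_lt.mpr this.le)
  -- sum bound
  have hsum : μ B = ∑' γ : Γ, μ (T γ) := hF.measure_eq_tsum B
  have hle : ∑' γ : Γ, μ (T γ) ≤ μ F := by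
    rw [← measure_iUnion hTdisj hTmeas]
    exact measure_mono (Set.iUnion_subset fun γ => Set.inter_subset_right)
  exact absurd hkey (not_lt.mpr (by rw [hsum] at *; exact le_trans (le_of_eq hsum) hle))
end

section
/- Let G be a group, j ≥ 1, and x₁, …, x_j ∈ G. Then there exists a finite word w = (i₁,ε₁)…(i_m,ε_m) with letters i_r ∈ {1,…,j} and exponents ε_r ∈ {+1,−1} such that the product x_{i₁}^{ε₁} ⋯ x_{i_m}^{ε_m} equals the right-nested iterated commutator [x₁, …, x_j]_c, and for each index i with 1 ≤ i ≤ j−1 the letter i occurs exactly 2^i times in w, while the letter j occurs exactly 2^{j−1} times in w. -/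
open scoped commutatorElement

/-- The right-nested iterated commutator `[x₁, …, x_j]_c` of a list of group elements:
`[x]_c = x`, `[x₁, x₂]_c = x₁x₂x₁⁻¹x₂⁻¹`, and `[x₁, …, x_j]_c = [x₁, [x₂, …, x_j]_c]_c`.
(The empty list is sent to `1`.) -/
def nestedComm {G : Type*} [Group G] : List G → G
  | [] => 1
  | [a] => a
  | a :: b :: rest => ⁅a, nestedComm (b :: rest)⁆

private lemma nestedComm_aux {G : Type*} [Group G] (m : ℕ) :
    ∀ x : Fin (m + 1) → G, ∃ w : List (Fin (m + 1) × Bool),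
      (w.map (fun p => if p.2 then x p.1 else (x p.1)⁻¹)).prod = nestedComm (List.ofFn x) ∧
      ∀ i : Fin (m + 1),
        w.countP (fun p => p.1 == i) =
          if (i : ℕ) + 1 = m + 1 then 2 ^ m else 2 ^ ((i : ℕ) + 1) := by
  induction m with
  | zero =>
    intro x
    refine ⟨[((0 : Fin 1), true)], ?_, ?_⟩
    · simp [nestedComm, List.ofFn_succ]
    · intro i
      fin_cases i
      simp
  | succ n ih =>
    intro x
    obtain ⟨w', hprod, hcount⟩ := ih (Fin.tail x)
    refine ⟨((0 : Fin (n + 2)), true) :: (w'.map fun p => (p.1.succ, p.2)) ++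
        ((0 : Fin (n + 2)), false) :: (w'.map fun p => (p.1.succ, !p.2)).reverse, ?_, ?_⟩
    · have hnc : nestedComm (List.ofFn x) = ⁅x 0, nestedComm (List.ofFn (Fin.tail x))⁆ := by
        rw [List.ofFn_succ, List.ofFn_succ]
        simp [nestedComm, Fin.tail, List.ofFn_succ]
      have hrev : ((w'.map fun p => (p.1.succ, !p.2)).reverse.map
          (fun p => if p.2 then x p.1 else (x p.1)⁻¹)).prod =
          (w'.map (fun p => if p.2 then Fin.tail x p.1 else (Fin.tail x p.1)⁻¹)).prod⁻¹ := by
        rw [List.map_reverse, List.map_map, List.prod_inv_reverse, List.map_map]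
        congr 1
        rw [List.reverse_inj]
        apply List.map_congr_left
        intro p _
        cases hb : p.2 <;> simp [Fin.tail, hb]
      have hmid : ((w'.map fun p => (p.1.succ, p.2)).map
          (fun p => if p.2 then x p.1 else (x p.1)⁻¹)).prod =
          (w'.map (fun p => if p.2 then Fin.tail x p.1 else (Fin.tail x p.1)⁻¹)).prod := by
        rw [List.map_map]
        rfl
      rw [hnc]
      simp only [List.map_cons, List.map_append, List.prod_cons, List.prod_append]
      rw [hrev, hmid, hprod]
      simp [commutatorElement_def, mul_assoc]
    · intro i
      induction i using Fin.cases with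
      | zero =>
        have h1 : List.countP (fun p => p.1 == (0 : Fin (n+2))) (w'.map fun p => (p.1.succ, p.2)) = 0 := by
          rw [List.countP_map]
          apply List.countP_eq_zero.mpr
          intro p _; simp [Fin.succ_ne_zero]
        have h2 : List.countP (fun p => p.1 == (0 : Fin (n+2))) (w'.map fun p => (p.1.succ, !p.2)) = 0 := by
          rw [List.countP_map]
          apply List.countP_eq_zero.mpr
          intro p _; simp [Fin.succ_ne_zero]
        simp [List.countP_cons, List.countP_append, List.countP_reverse, h1, h2]
      | succ k =>
        have hk := hcount k
        have h1 : List.countP (fun p => p.1 == k.succ) (w'.map fun p => (p.1.succ, p.2)) =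
            List.countP (fun p => p.1 == k) w' := by
          rw [List.countP_map]
          apply List.countP_congr
          intro p _; simp [Fin.succ_inj]
        have h2 : List.countP (fun p => p.1 == k.succ) (w'.map fun p => (p.1.succ, !p.2)) =
            List.countP (fun p => p.1 == k) w' := by
          rw [List.countP_map]
          apply List.countP_congr
          intro p _; simp [Fin.succ_inj]
        have hz : ((0 : Fin (n+2)) == k.succ) = false := by
          simp [(Fin.succ_ne_zero k).symm]
        simp only [List.countP_cons, List.countP_append, List.countP_reverse, h1, h2, hz,
          cond_false, Fin.val_succ]
        rw [hk]
        by_cases h : (k : ℕ) + 1 = n + 1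
        · simp [h, show (k:ℕ) + 1 + 1 = n + 1 + 1 from by omega, pow_succ]
          ring
        · simp [h, show ¬((k:ℕ) + 1 + 1 = n + 1 + 1) from by omega, show ¬((k:ℕ) = n) from by omega, pow_succ]
          ring

/-- The iterated commutator `[x₁, …, x_j]_c` can be written as a word in the letters
`x_i^{±1}` in which, for `1 ≤ i ≤ j−1`, the letter `x_i` occurs exactly `2^i` times, and the
letter `x_j` occurs exactly `2^{j−1}` times. Letters are recorded as pairs `(i, ε)` with
`ε : Bool` indicating the exponent `+1` (`true`) or `−1` (`false`); here `i : Fin j`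
corresponds to the (1-indexed) letter `i+1`. -/
theorem nestedComm_eq_word_with_letter_counts
    {G : Type*} [Group G] (j : ℕ) (hj : 1 ≤ j) (x : Fin j → G) :
    ∃ w : List (Fin j × Bool),
      (w.map (fun p => if p.2 then x p.1 else (x p.1)⁻¹)).prod = nestedComm (List.ofFn x) ∧
      ∀ i : Fin j,
        w.countP (fun p => p.1 == i) =
          if (i : ℕ) + 1 = j then 2 ^ (j - 1) else 2 ^ ((i : ℕ) + 1) := by
  obtain ⟨m, rfl⟩ : ∃ m, j = m + 1 := ⟨j - 1, by omega⟩
  simpa using nestedComm_aux m x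
end

section
/- Let G be a group equipped with a metric dist that is left-invariant, i.e., dist(g·x, g·y) = dist(x, y) for all g, x, y ∈ G. Then for every j ≥ 1 and all x₁, …, x_j ∈ G, the right-nested iterated commutator satisfies dist(1, [x₁, …, x_j]_c) ≤ Σ_{i=1}^{j−1} 2^i · dist(1, x_i) + 2^{j−1} · dist(1, x_j). -/
open scoped commutatorElement

section aux

variable {G : Type*} [Group G] [MetricSpace G]

lemma aux_dist_one_inv (hinv : ∀ g x y : G, dist (g * x) (g * y) = dist x y) (a : G) : dist (1 : G) a⁻¹ = dist 1 a := by
  have h := hinv a 1 a⁻¹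
  simp at h
  rw [← h, dist_comm]

lemma aux_dist_one_mul (hinv : ∀ g x y : G, dist (g * x) (g * y) = dist x y) (a b : G) : dist (1 : G) (a * b) ≤ dist 1 a + dist 1 b := by
  have h := hinv a 1 b
  calc dist (1 : G) (a * b) ≤ dist 1 a + dist a (a * b) := dist_triangle _ _ _
    _ = dist 1 a + dist 1 b := by rw [show dist a (a*b) = dist 1 b by simpa using h]

lemma aux_dist_comm (hinv : ∀ g x y : G, dist (g * x) (g * y) = dist x y) (a b : G) :
    dist (1 : G) ⁅a, b⁆ ≤ 2 * dist 1 a + 2 * dist 1 b := by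
  have h1 : ⁅a, b⁆ = (a * b) * (a⁻¹ * b⁻¹) := by group
  rw [h1]
  calc dist (1 : G) ((a * b) * (a⁻¹ * b⁻¹))
      ≤ dist (1:G) (a*b) + dist (1:G) (a⁻¹ * b⁻¹) := aux_dist_one_mul hinv _ _
    _ ≤ (dist (1:G) a + dist (1:G) b) + (dist (1:G) a⁻¹ + dist (1:G) b⁻¹) :=
        add_le_add (aux_dist_one_mul hinv _ _) (aux_dist_one_mul hinv _ _)
    _ = 2 * dist 1 a + 2 * dist 1 b := by
        rw [aux_dist_one_inv hinv, aux_dist_one_inv hinv]; ring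

end aux

/-- For a group `G` with a left-invariant metric,
`dist(1, [x₁, …, x_j]_c) ≤ Σ_{i=1}^{j−1} 2^i · dist(1, x_i) + 2^{j−1} · dist(1, x_j)`.
Here `i : Fin j` corresponds to the (1-indexed) letter `i+1`, so the coefficient of
`dist 1 (x i)` is `2^{i+1}` when `i+1 ≤ j−1` and `2^{j−1}` when `i+1 = j`. -/
theorem dist_one_nestedComm_le
    {G : Type*} [Group G] [MetricSpace G]
    (hinv : ∀ g x y : G, dist (g * x) (g * y) = dist x y)
    (j : ℕ) (hj : 1 ≤ j) (x : Fin j → G) :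
    dist (1 : G) (nestedComm (List.ofFn x)) ≤
      ∑ i : Fin j,
        (if (i : ℕ) + 1 = j then (2 : ℝ) ^ (j - 1) else (2 : ℝ) ^ ((i : ℕ) + 1))
          * dist (1 : G) (x i) := by
  induction j with
  | zero => omega
  | succ n ih =>
    match n, ih with
    | 0, _ =>
      simp [List.ofFn_succ, nestedComm]
    | Nat.succ m, ih =>
      have ih' := ih (by omega) (fun i => x i.succ)
      rw [List.ofFn_succ]
      have hcons : nestedComm (x 0 :: List.ofFn fun i => x i.succ) =
          ⁅x 0, nestedComm (List.ofFn fun i => x i.succ)⁆ := by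
        rw [List.ofFn_succ]
        rfl
      rw [hcons]
      calc dist (1 : G) ⁅x 0, nestedComm (List.ofFn fun i => x i.succ)⁆
          ≤ 2 * dist 1 (x 0) + 2 * dist 1 (nestedComm (List.ofFn fun i => x i.succ)) :=
            aux_dist_comm hinv _ _
        _ ≤ 2 * dist 1 (x 0) + 2 * ∑ i : Fin (m+1),
              (if (i : ℕ) + 1 = m+1 then (2 : ℝ) ^ (m+1 - 1) else (2 : ℝ) ^ ((i : ℕ) + 1))
                * dist (1 : G) (x i.succ) := by
            gcongr
        _ = ∑ i : Fin (m+1+1),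
              (if (i : ℕ) + 1 = m+1+1 then (2 : ℝ) ^ (m+1+1 - 1) else (2 : ℝ) ^ ((i : ℕ) + 1))
                * dist (1 : G) (x i) := by
            conv_rhs => rw [Fin.sum_univ_succ]
            rw [Finset.mul_sum]
            congr 1
            · simp only [Fin.val_zero]
              simp only [show ¬ ((0:ℕ) + 1 = m + 1 + 1) by omega, if_false]
              ring
            · apply Finset.sum_congr rfl
              intro i _
              simp only [Fin.val_succ]
              by_cases h : (i:ℕ) + 1 = m + 1
              · rw [if_pos h, if_pos (by omega)]
                rw [show m+1+1-1 = (m+1-1)+1 by omega, pow_succ]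
                ring
              · rw [if_neg h, if_neg (by omega), pow_succ]
                ring
end

section
/- Let G be a group equipped with a metric dist that is left-invariant, i.e., dist(g·x, g·y) = dist(x, y) for all g, x, y ∈ G. Let k ≥ 1, let j be an integer with 1 ≤ j ≤ k, let N ≥ 1, and let x_{n,i} ∈ G for n = 1, …, N and i = 1, …, j. Then dist(1, ∏_{n=1}^{N} [x_{n,1}, …, x_{n,j}]_c) ≤ 2^{k−1} · Σ_{n=1}^{N} Σ_{i=1}^{j} dist(1, x_{n,i}). -/
open scoped commutatorElement

section aux
variable {G : Type*} [Group G] [MetricSpace G]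
variable (hinv : ∀ g x y : G, dist (g * x) (g * y) = dist x y)
include hinv

lemma aux_d_mul (a b : G) : dist (1:G) (a*b) ≤ dist 1 a + dist 1 b := by
  calc dist (1:G) (a*b) ≤ dist 1 a + dist a (a*b) := dist_triangle _ _ _
  _ = dist 1 a + dist 1 b := by rw [show dist a (a*b) = dist (a*1) (a*b) by rw [mul_one], hinv]

lemma aux_d_inv (a : G) : dist (1:G) a⁻¹ = dist 1 a := by
  have h := hinv a⁻¹ a 1
  simp only [inv_mul_cancel, mul_one] at h
  rw [h, dist_comm]

lemma aux_d_comm (a b : G) : dist (1:G) ⁅a, b⁆ ≤ 2 * (dist 1 a + dist 1 b) := by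
  show dist (1:G) (a * b * a⁻¹ * b⁻¹) ≤ _
  rw [show a * b * a⁻¹ * b⁻¹ = a * (b * (a⁻¹ * b⁻¹)) by group]
  have h1 := aux_d_mul hinv a (b * (a⁻¹ * b⁻¹))
  have h2 := aux_d_mul hinv b (a⁻¹ * b⁻¹)
  have h3 := aux_d_mul hinv a⁻¹ b⁻¹
  rw [aux_d_inv hinv, aux_d_inv hinv] at h3
  linarith

lemma aux_d_nested : ∀ l : List G,
    dist (1:G) (nestedComm l) ≤ 2 ^ (l.length - 1) * (l.map (dist 1)).sum
  | [] => by simp [nestedComm]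
  | [a] => by simp [nestedComm]
  | a :: b :: rest => by
    have ih := aux_d_nested (b :: rest)
    have hc := aux_d_comm hinv a (nestedComm (b :: rest))
    have hlen : (b :: rest).length - 1 = rest.length := by simp
    rw [hlen] at ih
    have h2 : (2:ℝ) ≤ 2 ^ (rest.length + 1) := by
      calc (2:ℝ) = 2^1 := by norm_num
      _ ≤ 2^(rest.length+1) := by
        apply pow_le_pow_right₀ (by norm_num); omega
    have hda : 0 ≤ dist (1:G) a := dist_nonneg
    have hS : (0:ℝ) ≤ ((b :: rest).map (dist 1)).sum := by
      apply List.sum_nonneg; intro y hy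
      simp only [List.mem_map] at hy; obtain ⟨z, _, rfl⟩ := hy; exact dist_nonneg
    show dist (1:G) ⁅a, nestedComm (b :: rest)⁆ ≤
      2 ^ ((a :: b :: rest).length - 1) * ((a :: b :: rest).map (dist 1)).sum
    have hlen2 : (a :: b :: rest).length - 1 = rest.length + 1 := by simp
    rw [hlen2]
    have hmono : (2:ℝ) ^ rest.length * ((b :: rest).map (dist 1)).sum
        ≤ 2 ^ (rest.length) * ((b :: rest).map (dist 1)).sum := le_refl _
    calc dist (1:G) ⁅a, nestedComm (b :: rest)⁆
        ≤ 2 * (dist 1 a + dist 1 (nestedComm (b :: rest))) := hc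
      _ ≤ 2 * dist 1 a + 2 * (2 ^ rest.length * ((b :: rest).map (dist 1)).sum) := by nlinarith
      _ = 2 * dist 1 a + 2 ^ (rest.length + 1) * ((b :: rest).map (dist 1)).sum := by ring
      _ ≤ 2 ^ (rest.length + 1) * dist 1 a
          + 2 ^ (rest.length + 1) * ((b :: rest).map (dist 1)).sum := by nlinarith
      _ = 2 ^ (rest.length + 1) * ((a :: b :: rest).map (dist 1)).sum := by
          simp [List.map_cons]; ring

lemma aux_d_prod : ∀ l : List G, dist (1:G) l.prod ≤ (l.map (dist 1)).sum
  | [] => by simp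
  | a :: rest => by
    have ih := aux_d_prod rest
    calc dist (1:G) (a :: rest).prod = dist 1 (a * rest.prod) := by simp
    _ ≤ dist 1 a + dist 1 rest.prod := aux_d_mul hinv a rest.prod
    _ ≤ dist 1 a + (rest.map (dist 1)).sum := by linarith
    _ = ((a :: rest).map (dist 1)).sum := by simp

end aux

/-- For a group `G` with a left-invariant metric, `k ≥ 1`, `1 ≤ j ≤ k`, `N ≥ 1`, and elements
`x_{n,i} ∈ G` (`n = 1, …, N`, `i = 1, …, j`), the distance from the identity to the ordered
product `∏_{n=1}^{N} [x_{n,1}, …, x_{n,j}]_c` is at most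
`2^{k−1} · Σ_{n=1}^{N} Σ_{i=1}^{j} dist(1, x_{n,i})` (the combinatorial distance, up to the
factor `2^{k−1}`). -/
theorem dist_one_prod_nestedComm_le
    {G : Type*} [Group G] [MetricSpace G]
    (hinv : ∀ g x y : G, dist (g * x) (g * y) = dist x y)
    (k j N : ℕ) (hk : 1 ≤ k) (hj : 1 ≤ j) (hjk : j ≤ k) (hN : 1 ≤ N)
    (x : Fin N → Fin j → G) :
    dist (1 : G) (List.ofFn (fun n => nestedComm (List.ofFn (x n)))).prod ≤
      (2 : ℝ) ^ (k - 1) * ∑ n : Fin N, ∑ i : Fin j, dist (1 : G) (x n i) := by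
  have step1 := aux_d_prod hinv (List.ofFn (fun n => nestedComm (List.ofFn (x n))))
  have step2 : ∀ n : Fin N, dist (1:G) (nestedComm (List.ofFn (x n)))
      ≤ 2 ^ (k - 1) * ∑ i : Fin j, dist (1:G) (x n i) := by
    intro n
    have h := aux_d_nested hinv (List.ofFn (x n))
    have hlen : (List.ofFn (x n)).length = j := by simp
    have hsum : ((List.ofFn (x n)).map (dist (1:G))).sum = ∑ i : Fin j, dist (1:G) (x n i) := by
      rw [List.map_ofFn, List.sum_ofFn]; rfl
    rw [hlen, hsum] at h
    refine h.trans ?_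
    apply mul_le_mul_of_nonneg_right
    · exact pow_le_pow_right₀ (by norm_num) (by omega)
    · exact Finset.sum_nonneg fun i _ => dist_nonneg
  refine step1.trans ?_
  rw [List.map_ofFn, List.sum_ofFn]
  rw [Finset.mul_sum]
  exact Finset.sum_le_sum fun n _ => step2 n
end

section
/- Let E be a d-dimensional real inner product space (d ≥ 1) with orthonormal basis (e_s)_{s=1}^{d}, let j ≥ 1, and let α : {1,…,d}^j → ℝ be a coefficient array with ν = (Σ_{s ∈ {1,…,d}^j} α(s)²)^{1/2}. Then there exist vectors X_{n,i} ∈ E for n = 1, …, d^j and i = 1, …, j such that: (i) in the j-fold tensor power E^{⊗j} one has Σ_{n=1}^{d^j} X_{n,1} ⊗ ⋯ ⊗ X_{n,j} = Σ_{s} α(s) · e_{s₁} ⊗ ⋯ ⊗ e_{s_j}; (ii) ‖X_{n,1}‖ = ‖X_{n,2}‖ = ⋯ = ‖X_{n,j}‖ for every n; (iii) Σ_{n=1}^{d^j} ∏_{i=1}^{j} ‖X_{n,i}‖² = ν²; and (iv) Σ_{n=1}^{d^j} Σ_{i=1}^{j} ‖X_{n,i}‖ ≤ j · d^{(2j−1)/2}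 · ν^{1/j}. -/
/-!
Each coefficient `α s` is split into `j` real factors of common absolute value `|α s| ^ (1/j)`,
the sign going into a single factor; the rescaled basis vectors then have equal norms and their
tensor product is `α s • e_{s₁} ⊗ ⋯ ⊗ e_{s_j}`. The bound on the combinatorial distance is
Hölder's inequality with exponent `2j` for the `d ^ j` numbers `|α s| ^ (1/j)`, whose `2j`-th
powers sum to `ν²`.
-/

open Finset

theorem Real.sum_le_card_rpow_mul_sum_rpow_rpow {σ : Type*} (s : Finset σ) {f : σ → ℝ}
    (hf : ∀ i ∈ s, 0 ≤ f i) {p : ℝ} (hp : 1 ≤ p) :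
    ∑ i ∈ s, f i ≤ (#s : ℝ) ^ (1 - p⁻¹) * (∑ i ∈ s, f i ^ p) ^ p⁻¹ := by
  rcases hp.eq_or_lt with rfl | hp
  · simp
  have hpq : p.HolderConjugate (p / (p - 1)) := .conjExponent hp
  have holder := Real.inner_le_Lp_mul_Lq_of_nonneg s hpq.symm (f := fun _ => 1) (g := f)
    (fun _ _ => zero_le_one) hf
  have hq : 1 / (p / (p - 1)) = 1 - p⁻¹ := by
    field_simp [(by linarith : p - 1 ≠ 0)]
  simpa [hq] using holder

theorem exists_tprod_eq_smul_tprod_forall_norm_eq {ι E : Type*} [Fintype ι] [Nonempty ι]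
    [SeminormedAddCommGroup E] [NormedSpace ℝ E] {v : ι → E} (hv : ∀ i, ‖v i‖ = 1) (a : ℝ) :
    ∃ X : ι → E, PiTensorProduct.tprod ℝ X = a • PiTensorProduct.tprod ℝ v ∧
      ∀ i, ‖X i‖ = |a| ^ ((Fintype.card ι : ℝ)⁻¹) := by
  classical
  obtain ⟨i₀⟩ := ‹Nonempty ι›
  set r := |a| ^ ((Fintype.card ι : ℝ)⁻¹)
  have hr : 0 ≤ r := by positivity
  let c : ι → ℝ := fun i => (if i = i₀ then (SignType.sign a : ℝ) else 1) * r
  have hc_prod : ∏ i, c i = a := by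
    simp only [c, prod_mul_distrib, prod_ite_eq', mem_univ, if_true, prod_const, card_univ]
    rw [Real.rpow_inv_natCast_pow (abs_nonneg a) Fintype.card_ne_zero, sign_mul_abs]
  have hc_abs : ∀ i, |c i| = r := by
    intro i
    rcases lt_trichotomy a 0 with ha | rfl | ha
    · by_cases hi : i = i₀ <;> simp [c, hi, ha, abs_of_nonneg hr]
    · simp [c, r]
    · by_cases hi : i = i₀ <;> simp [c, hi, ha, abs_of_nonneg hr]
  refine ⟨fun i => c i • v i, ?_, fun i => ?_⟩
  · rw [MultilinearMap.map_smul_univ, hc_prod]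
  · rw [norm_smul, hv, mul_one, Real.norm_eq_abs, hc_abs]

theorem sum_abs_rpow_inv_le {σ : Type*} [Fintype σ] (a : σ → ℝ) {j : ℕ} (hj : j ≠ 0) :
    ∑ s, |a s| ^ (j⁻¹ : ℝ) ≤
      (Fintype.card σ : ℝ) ^ (1 - (2 * j : ℝ)⁻¹) * √(∑ s, a s ^ 2) ^ (j⁻¹ : ℝ) := by
  have hp : (1 : ℝ) ≤ 2 * j := by
    have : (1 : ℝ) ≤ j := by exact_mod_cast Nat.one_le_iff_ne_zero.mpr hj
    linarith
  have hpow : ∀ s, (|a s| ^ (j⁻¹ : ℝ)) ^ (2 * j : ℝ) = a s ^ 2 := fun s => by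
    rw [← Real.rpow_mul (abs_nonneg _), show (j⁻¹ : ℝ) * (2 * j) = 2 by field_simp,
      Real.rpow_two, sq_abs]
  have hsqrt : √(∑ s, a s ^ 2) ^ (j⁻¹ : ℝ) = (∑ s, a s ^ 2) ^ (2 * j : ℝ)⁻¹ := by
    rw [Real.sqrt_eq_rpow, ← Real.rpow_mul (by positivity), mul_inv, one_div]
  simpa only [hpow, hsqrt, card_univ] using
    Real.sum_le_card_rpow_mul_sum_rpow_rpow univ
      (f := fun s => |a s| ^ (j⁻¹ : ℝ)) (fun s _ => by positivity) hp

theorem exists_adjusted_horizontal_vectors_general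
    {E : Type*} [NormedAddCommGroup E] [InnerProductSpace ℝ E]
    (d : ℕ) (b : OrthonormalBasis (Fin d) ℝ E)
    (j : ℕ) (hj : 1 ≤ j)
    (α : (Fin j → Fin d) → ℝ)
    (ν : ℝ) (hν : ν = Real.sqrt (∑ s : Fin j → Fin d, α s ^ 2)) :
    ∃ X : Fin (d ^ j) → Fin j → E,
      (∑ n : Fin (d ^ j), PiTensorProduct.tprod ℝ (X n)) =
        (∑ s : Fin j → Fin d, α s •
          PiTensorProduct.tprod ℝ (fun i : Fin j => b (s i))) ∧
      (∀ (n : Fin (d ^ j)) (i i' : Fin j), ‖X n i‖ = ‖X n i'‖) ∧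
      (∑ n : Fin (d ^ j), ∏ i : Fin j, ‖X n i‖ ^ 2) = ν ^ 2 ∧
      (∑ n : Fin (d ^ j), ∑ i : Fin j, ‖X n i‖) ≤
        j * (d : ℝ) ^ ((2 * (j : ℝ) - 1) / 2) * ν ^ ((1 : ℝ) / j) := by
  have hj₀ : j ≠ 0 := Nat.one_le_iff_ne_zero.mp hj
  have : Nonempty (Fin j) := ⟨⟨0, hj⟩⟩
  choose Y hY_tprod hY_norm using fun s : Fin j → Fin d =>
    exists_tprod_eq_smul_tprod_forall_norm_eq (fun i => b.norm_eq_one (s i)) (α s)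
  simp only [Fintype.card_fin] at hY_norm
  let e : Fin (d ^ j) ≃ (Fin j → Fin d) := (Fintype.equivFinOfCardEq (by simp)).symm
  refine ⟨fun n => Y (e n), ?_, fun n i i' => by rw [hY_norm, hY_norm], ?_, ?_⟩
  · simp only [hY_tprod]
    exact e.sum_comp fun s => α s • PiTensorProduct.tprod ℝ fun i => b (s i)
  · have hpow : ∀ s, ((|α s| ^ (j⁻¹ : ℝ)) ^ 2) ^ j = α s ^ 2 := fun s => by
      rw [← pow_mul, mul_comm, pow_mul, Real.rpow_inv_natCast_pow (abs_nonneg _) hj₀, sq_abs]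
    simp only [hY_norm, prod_const, card_univ, Fintype.card_fin, hpow]
    rw [e.sum_comp fun s => α s ^ 2, hν, Real.sq_sqrt (by positivity)]
  · have hcard : ((d : ℝ) ^ j) ^ (1 - (2 * j : ℝ)⁻¹) = (d : ℝ) ^ ((2 * (j : ℝ) - 1) / 2) := by
      rw [← Real.rpow_natCast, ← Real.rpow_mul (Nat.cast_nonneg d)]
      congr 1
      field_simp
    calc ∑ n, ∑ i, ‖Y (e n) i‖ = j * ∑ s, |α s| ^ (j⁻¹ : ℝ) := by
          simp only [hY_norm, sum_const, card_univ, Fintype.card_fin, nsmul_eq_mul, ← mul_sum,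
            e.sum_comp (fun s => |α s| ^ (j⁻¹ : ℝ))]
      _ ≤ j * (d : ℝ) ^ ((2 * (j : ℝ) - 1) / 2) * ν ^ ((1 : ℝ) / j) := by
          rw [mul_assoc, hν, one_div, ← hcard]
          gcongr
          simpa using sum_abs_rpow_inv_le α hj₀

/-- Existence of an "adjusted" family of horizontal vectors. Let `E` be a `d`-dimensional
real inner product space (`d ≥ 1`) with orthonormal basis `(e_s)`, `j ≥ 1`, and let
`α : {1,…,d}^j → ℝ` with `ν = (Σ_s α(s)²)^{1/2}`. Then there are vectors `X_{n,i} ∈ E`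
(`n = 1, …, d^j`, `i = 1, …, j`) such that: (i) `Σ_n X_{n,1} ⊗ ⋯ ⊗ X_{n,j}` equals
`Σ_s α(s) e_{s₁} ⊗ ⋯ ⊗ e_{s_j}` in the `j`-fold tensor power `E^{⊗j}`; (ii) for each `n`
all the `‖X_{n,i}‖` coincide; (iii) `Σ_n ∏_i ‖X_{n,i}‖² = ν²`; and (iv) the combinatorial
distance satisfies `Σ_n Σ_i ‖X_{n,i}‖ ≤ j · d^{(2j−1)/2} · ν^{1/j}`. -/
theorem exists_adjusted_horizontal_vectors
    {E : Type*} [NormedAddCommGroup E] [InnerProductSpace ℝ E]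
    (d : ℕ) (hd : 1 ≤ d) (b : OrthonormalBasis (Fin d) ℝ E)
    (j : ℕ) (hj : 1 ≤ j)
    (α : (Fin j → Fin d) → ℝ)
    (ν : ℝ) (hν : ν = Real.sqrt (∑ s : Fin j → Fin d, α s ^ 2)) :
    ∃ X : Fin (d ^ j) → Fin j → E,
      (∑ n : Fin (d ^ j), PiTensorProduct.tprod ℝ (X n)) =
        (∑ s : Fin j → Fin d, α s •
          PiTensorProduct.tprod ℝ (fun i : Fin j => b (s i))) ∧
      (∀ (n : Fin (d ^ j)) (i i' : Fin j), ‖X n i‖ = ‖X n i'‖) ∧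
      (∑ n : Fin (d ^ j), ∏ i : Fin j, ‖X n i‖ ^ 2) = ν ^ 2 ∧
      (∑ n : Fin (d ^ j), ∑ i : Fin j, ‖X n i‖) ≤
        j * (d : ℝ) ^ ((2 * (j : ℝ) - 1) / 2) * ν ^ ((1 : ℝ) / j) :=
  exists_adjusted_horizontal_vectors_general d b j hj α ν hν
end
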